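/- arXiv:1905.04006 — 2 statements merged into one kernel-verified Lean document; each statement's English description precedes it below -/
import Mathlib

section
/- Setting α = R_0/r and V_c(α) = (2πα + 1)V_T (with r = 1, V_T = 1), the quantity t*(V_c) = √((−b−√(b²−4ac))/(2a)) − 2πα/(2πα+1) tends to 0 as α → ∞, where a, b, c are the quadratic coefficients determined by α; consequently lim_{α→∞} f(t*(V_c), V_c) = 0. -/
open Filter Real

noncomputable def stmt8.k (α : ℝ) : ℝ := 1 / (2 * α * (α + 1))
noncomputable def stmt8.a (α : ℝ) : ℝ := (stmt8.k α) ^ 2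
noncomputable def stmt8.b (α : ℝ) : ℝ :=
  1 / ((2 * Real.pi * α + 1) ^ 2 * (α + 1) ^ 2) - 2 * (stmt8.k α) ^ 2 - 2 * stmt8.k α
noncomputable def stmt8.c (α : ℝ) : ℝ := 2 * stmt8.k α + (stmt8.k α) ^ 2
noncomputable def stmt8.Vc (α : ℝ) : ℝ := 2 * Real.pi * α + 1
noncomputable def stmt8.tstar (α : ℝ) : ℝ :=
  Real.sqrt ((-stmt8.b α - Real.sqrt ((stmt8.b α) ^ 2 - 4 * stmt8.a α * stmt8.c α))
    / (2 * stmt8.a α)) - 2 * Real.pi * α / (2 * Real.pi * α + 1)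
noncomputable def stmt8.f (α t V : ℝ) : ℝ :=
  1 + stmt8.k α * (1 - (2 * Real.pi * α / V + t) ^ 2) - Real.cos (V * t / α)

namespace stmt8

noncomputable def l (α : ℝ) : ℝ := 1 / ((2 * Real.pi * α + 1) ^ 2 * (α + 1) ^ 2)

noncomputable def R (α : ℝ) : ℝ :=
  (-b α - Real.sqrt ((b α) ^ 2 - 4 * a α * c α)) / (2 * a α)

noncomputable def g (α : ℝ) : ℝ :=
  -b α / c α + Real.sqrt ((b α / c α) ^ 2 - 4 * (a α / c α))

lemma b_eq (α : ℝ) : b α = l α - a α - c α := by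
  unfold b l a c; ring

lemma k_pos {α : ℝ} (h : 1 ≤ α) : 0 < k α := by
  have hα : (0:ℝ) < α := lt_of_lt_of_le one_pos h
  unfold k
  positivity

lemma c_pos {α : ℝ} (h : 1 ≤ α) : 0 < c α := by
  have := k_pos h
  unfold c
  nlinarith

lemma a_pos {α : ℝ} (h : 1 ≤ α) : 0 < a α := by
  have := k_pos h
  unfold a
  positivity

lemma k_le {α : ℝ} (h : 1 ≤ α) : k α ≤ 1 / α := by
  have hα : (0:ℝ) < α := lt_of_lt_of_le one_pos h
  unfold k
  rw [div_le_div_iff₀ (by nlinarith) hα]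
  nlinarith

lemma tendsto_one_div : Tendsto (fun α : ℝ => 1 / α) atTop (nhds 0) := by
  simpa [one_div] using tendsto_inv_atTop_zero

lemma tendsto_k : Tendsto k atTop (nhds 0) := by
  apply tendsto_of_tendsto_of_tendsto_of_le_of_le' tendsto_const_nhds tendsto_one_div
  · filter_upwards [eventually_ge_atTop (1:ℝ)] with α hα using (k_pos hα).le
  · filter_upwards [eventually_ge_atTop (1:ℝ)] with α hα using k_le hα

lemma ac_le_k {α : ℝ} (h : 1 ≤ α) : a α / c α ≤ k α := by
  have hk := k_pos h
  have hc := c_pos h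
  rw [div_le_iff₀ hc]
  unfold a c
  nlinarith

lemma l_le_a {α : ℝ} (h : 1 ≤ α) : l α ≤ a α := by
  have hα : (0:ℝ) < α := lt_of_lt_of_le one_pos h
  have hpi := Real.pi_gt_three
  unfold l a k
  rw [div_pow, one_pow]
  apply one_div_le_one_div_of_le (by positivity)
  have h2 : (2 * α) ^ 2 ≤ (2 * π * α + 1) ^ 2 := by
    have h9 : 9 * α ^ 2 ≤ π ^ 2 * α ^ 2 := by
      have : (9:ℝ) ≤ π ^ 2 := by nlinarith
      exact mul_le_mul_of_nonneg_right this (sq_nonneg α)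
    nlinarith [Real.pi_pos, mul_pos hα hα]
  nlinarith [sq_nonneg (α + 1), mul_le_mul_of_nonneg_right h2 (sq_nonneg (α + 1))]

lemma l_nonneg {α : ℝ} (h : 1 ≤ α) : 0 ≤ l α := by
  have hα : (0:ℝ) < α := lt_of_lt_of_le one_pos h
  have hpi := Real.pi_pos
  unfold l
  positivity

lemma tendsto_ac : Tendsto (fun α => a α / c α) atTop (nhds 0) := by
  apply tendsto_of_tendsto_of_tendsto_of_le_of_le' tendsto_const_nhds tendsto_k
  · filter_upwards [eventually_ge_atTop (1:ℝ)] with α hα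
    exact div_nonneg (a_pos hα).le (c_pos hα).le
  · filter_upwards [eventually_ge_atTop (1:ℝ)] with α hα using ac_le_k hα

lemma tendsto_lc : Tendsto (fun α => l α / c α) atTop (nhds 0) := by
  apply tendsto_of_tendsto_of_tendsto_of_le_of_le' tendsto_const_nhds tendsto_k
  · filter_upwards [eventually_ge_atTop (1:ℝ)] with α hα
    exact div_nonneg (l_nonneg hα) (c_pos hα).le
  · filter_upwards [eventually_ge_atTop (1:ℝ)] with α hα
    exact le_trans ((div_le_div_iff_of_pos_right (c_pos hα)).mpr (l_le_a hα)) (ac_le_k hα)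

lemma tendsto_nbc : Tendsto (fun α => -b α / c α) atTop (nhds 1) := by
  have h : Tendsto (fun α => 1 + a α / c α - l α / c α) atTop (nhds 1) := by
    have := (((tendsto_const_nhds : Tendsto (fun _ : ℝ => (1:ℝ)) atTop (nhds 1)).add tendsto_ac).sub tendsto_lc)
    simpa using this
  apply h.congr'
  filter_upwards [eventually_ge_atTop (1:ℝ)] with α hα
  have hc := (c_pos hα).ne'
  rw [b_eq]
  field_simp
  ring

lemma tendsto_disc : Tendsto (fun α => (b α / c α) ^ 2 - 4 * (a α / c α)) atTop (nhds 1) := by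
  have h1 : Tendsto (fun α => (b α / c α) ^ 2) atTop (nhds 1) := by
    have := tendsto_nbc.pow 2
    simp only [neg_div] at this
    simpa [neg_pow] using this
  have := h1.sub (tendsto_ac.const_mul 4)
  simpa using this

lemma tendsto_g : Tendsto g atTop (nhds 2) := by
  have hs : Tendsto (fun α => Real.sqrt ((b α / c α) ^ 2 - 4 * (a α / c α))) atTop (nhds 1) := by
    have := tendsto_disc.sqrt
    simpa using this
  have := tendsto_nbc.add hs
  unfold g
  convert this using 2
  norm_num

lemma tendsto_R : Tendsto R atTop (nhds 1) := by
  have hgpos : ∀ᶠ α in atTop, 0 < g α :=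
    tendsto_g.eventually (eventually_gt_nhds (by norm_num))
  have hdpos : ∀ᶠ α in atTop, 0 < (b α) ^ 2 - 4 * a α * c α := by
    filter_upwards [eventually_ge_atTop (1:ℝ),
      tendsto_disc.eventually (eventually_gt_nhds (by norm_num : (0:ℝ) < 1))] with α hα hd
    have hc := (c_pos hα).ne'
    have key : (b α) ^ 2 - 4 * a α * c α
        = ((b α / c α) ^ 2 - 4 * (a α / c α)) * (c α) ^ 2 := by
      field_simp
    rw [key]
    exact mul_pos hd (pow_pos (c_pos hα) 2)
  have heq : ∀ᶠ α in atTop, 2 / g α = R α := by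
    filter_upwards [eventually_ge_atTop (1:ℝ), hgpos, hdpos] with α hα hg hd
    set s := Real.sqrt ((b α) ^ 2 - 4 * a α * c α) with hs
    have hs2 : s ^ 2 = (b α) ^ 2 - 4 * a α * c α := Real.sq_sqrt hd.le
    have hc := c_pos hα
    have ha := a_pos hα
    have hgc : g α = (-b α + s) / c α := by
      unfold g
      rw [show (b α / c α) ^ 2 - 4 * (a α / c α)
          = ((b α) ^ 2 - 4 * a α * c α) / (c α) ^ 2 by field_simp]
      rw [Real.sqrt_div hd.le, Real.sqrt_sq hc.le]
      ring
    have key2 : (-b α - s) * (-b α + s) = 4 * a α * c α := by linear_combination -hs2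
    symm
    rw [eq_div_iff hg.ne']
    unfold R
    rw [hgc, div_mul_div_comm, key2, div_eq_iff (by positivity)]
    ring
  have h2g : Tendsto (fun α => 2 / g α) atTop (nhds 1) := by
    have := (tendsto_const_nhds : Tendsto (fun _ : ℝ => (2:ℝ)) atTop (nhds 2)).div
      tendsto_g (by norm_num)
    rw [div_self two_ne_zero] at this
    exact this
  exact h2g.congr' heq

end stmt8

theorem tstar_and_f_tend_to_zero :
    Tendsto stmt8.tstar atTop (nhds 0) ∧
    Tendsto (fun α => stmt8.f α (stmt8.tstar α) (stmt8.Vc α)) atTop (nhds 0) := by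
  have hsqrtR : Tendsto (fun α => Real.sqrt (stmt8.R α)) atTop (nhds 1) := by
    have := stmt8.tendsto_R.sqrt
    simpa using this
  have hlin : Tendsto (fun α : ℝ => 2 * Real.pi * α + 1) atTop atTop := by
    apply tendsto_atTop_add_const_right
    exact tendsto_id.const_mul_atTop Real.two_pi_pos
  have hinv : Tendsto (fun α : ℝ => 1 / (2 * Real.pi * α + 1)) atTop (nhds 0) := by
    have := hlin.inv_tendsto_atTop
    simp only [one_div]
    exact this
  have hfrac : Tendsto (fun α : ℝ => 2 * Real.pi * α / (2 * Real.pi * α + 1)) atTop (nhds 1) := by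
    have h1 : Tendsto (fun α : ℝ => 1 - 1 / (2 * Real.pi * α + 1)) atTop (nhds 1) := by
      have := (tendsto_const_nhds : Tendsto (fun _ : ℝ => (1:ℝ)) atTop (nhds 1)).sub hinv
      simpa using this
    apply h1.congr'
    filter_upwards [eventually_ge_atTop (1:ℝ)] with α hα
    have hα0 : (0:ℝ) < α := lt_of_lt_of_le one_pos hα
    have hd : 2 * Real.pi * α + 1 ≠ 0 := by positivity
    field_simp
    ring
  have htdef : stmt8.tstar = fun α =>
      Real.sqrt (stmt8.R α) - 2 * Real.pi * α / (2 * Real.pi * α + 1) := rfl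
  have hT : Tendsto stmt8.tstar atTop (nhds 0) := by
    rw [htdef]
    have := hsqrtR.sub hfrac
    simpa using this
  refine ⟨hT, ?_⟩
  have hone : Tendsto (fun α : ℝ => 1 / α) atTop (nhds 0) := stmt8.tendsto_one_div
  have t2 : Tendsto (fun α => stmt8.k α * (1 - (Real.sqrt (stmt8.R α)) ^ 2)) atTop (nhds 0) := by
    have := stmt8.tendsto_k.mul
      ((tendsto_const_nhds : Tendsto (fun _ : ℝ => (1:ℝ)) atTop (nhds 1)).sub (hsqrtR.pow 2))
    simpa using this
  have targ : Tendsto (fun α => (2 * Real.pi + 1 / α) * stmt8.tstar α) atTop (nhds 0) := by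
    have := ((tendsto_const_nhds : Tendsto (fun _ : ℝ => 2 * Real.pi) atTop
      (nhds (2 * Real.pi))).add hone).mul hT
    simpa using this
  have tcos : Tendsto (fun α => Real.cos ((2 * Real.pi + 1 / α) * stmt8.tstar α)) atTop
      (nhds 1) := by
    have := (Real.continuous_cos.tendsto 0).comp targ
    rw [Real.cos_zero] at this
    exact this
  have hmain : Tendsto (fun α => 1 + stmt8.k α * (1 - (Real.sqrt (stmt8.R α)) ^ 2)
      - Real.cos ((2 * Real.pi + 1 / α) * stmt8.tstar α)) atTop (nhds 0) := by
    have := ((tendsto_const_nhds : Tendsto (fun _ : ℝ => (1:ℝ)) atTop (nhds 1)).add t2).sub tcos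
    simpa using this
  apply hmain.congr'
  filter_upwards [eventually_ge_atTop (1:ℝ)] with α hα
  have hα0 : (0:ℝ) < α := lt_of_lt_of_le one_pos hα
  have h1 : 2 * Real.pi * α / stmt8.Vc α + stmt8.tstar α = Real.sqrt (stmt8.R α) := by
    unfold stmt8.Vc stmt8.tstar stmt8.R
    ring
  have h2 : stmt8.Vc α * stmt8.tstar α / α = (2 * Real.pi + 1 / α) * stmt8.tstar α := by
    unfold stmt8.Vc
    field_simp
    try ring
  unfold stmt8.f
  rw [h1, h2]
end

section
/- Assume V_s > V_T > 0, r > 0, R_0 > r, and r(V_s−V_T) > 2πR_0V_T (i.e., the per-iteration shrink is positive). Then the sequence defined by R_{i+1} = c₃R_i + c₁ with c₁ = −r(V_s−V_T)/(V_s+V_T), c₃ = 1 + 2πV_T/(V_s+V_T) is strictly decreasing, and the least N with R_N ≤ r equals ⌈ln((2πrV_T − r(V_s−V_T))/(2πR_0V_T − r(V_s−V_T)))/ln(1 + 2πV_T/(V_s+V_T))⌉. -/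
theorem number_of_iterations (r Vs VT R0 : ℝ)
    (hVT : 0 < VT) (hVs : VT < Vs) (hr : 0 < r) (hR0 : r < R0)
    (hshrink : r * (Vs - VT) > 2 * Real.pi * R0 * VT)
    (c1 c3 : ℝ)
    (hc1 : c1 = -(r * (Vs - VT)) / (Vs + VT))
    (hc3 : c3 = 1 + 2 * Real.pi * VT / (Vs + VT))
    (R : ℕ → ℝ) (hR0' : R 0 = R0)
    (hRrec : ∀ i, R (i + 1) = c3 * R i + c1) :
    StrictAnti R ∧
    IsLeast {N : ℕ | R N ≤ r}
      (Int.toNat ⌈Real.log ((2 * Real.pi * r * VT - r * (Vs - VT)) /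
          (2 * Real.pi * R0 * VT - r * (Vs - VT))) /
        Real.log (1 + 2 * Real.pi * VT / (Vs + VT))⌉) := by
  have hπ : 0 < Real.pi := Real.pi_pos
  have hA : 0 < Vs + VT := by linarith
  have h2πVT : 0 < 2 * Real.pi * VT := by positivity
  set p : ℝ := r * (Vs - VT) / (2 * Real.pi * VT) with hp_def
  have hpR0 : R0 < p := by
    rw [hp_def, lt_div_iff₀ h2πVT]; nlinarith
  have hc3gt : 1 < c3 := by
    rw [hc3]; have : 0 < 2 * Real.pi * VT / (Vs + VT) := by positivity
    linarith
  have hfix : c3 * p + c1 = p := by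
    rw [hc3, hc1, hp_def]; field_simp; ring
  have hclosed : ∀ n : ℕ, R n = p + (R0 - p) * c3 ^ n := by
    intro n; induction n with
    | zero => simp [hR0']
    | succ k ih =>
      rw [hRrec, ih]
      have : c3 * (p + (R0 - p) * c3 ^ k) + c1
          = (c3 * p + c1) + (R0 - p) * c3 ^ (k + 1) := by ring
      rw [this, hfix]
  have hneg : R0 - p < 0 := by linarith
  have hanti : StrictAnti R := by
    apply strictAnti_nat_of_succ_lt
    intro n
    rw [hclosed n, hclosed (n + 1)]
    have : c3 ^ n < c3 ^ (n + 1) := pow_lt_pow_right₀ hc3gt (Nat.lt_succ_self n)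
    nlinarith
  set q : ℝ := (2 * Real.pi * r * VT - r * (Vs - VT)) /
      (2 * Real.pi * R0 * VT - r * (Vs - VT)) with hq_def
  have hqeq : q = (r - p) / (R0 - p) := by
    rw [hq_def, hp_def]
    rw [div_eq_div_iff (by nlinarith) (by intro h; nlinarith [div_pos (by nlinarith : (0:ℝ) < r * (Vs - VT) - 2 * Real.pi * R0 * VT) h2πVT])]
    · field_simp
  have hpR0' : 0 < p - R0 := by linarith
  have hq1 : 1 < q := by
    rw [hqeq]
    have h1 : (r - p) / (R0 - p) = (p - r) / (p - R0) := by
      rw [← neg_div_neg_eq]; ring_nf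
    rw [h1, one_lt_div hpR0']
    linarith
  have hq0 : 0 < q := lt_trans one_pos hq1
  have hlogc3 : 0 < Real.log c3 := Real.log_pos hc3gt
  have keyiff : ∀ N : ℕ, R N ≤ r ↔ Real.log q / Real.log c3 ≤ (N : ℝ) := by
    intro N
    rw [div_le_iff₀ hlogc3]
    rw [hclosed N]
    have hpow : (0:ℝ) < c3 ^ N := by positivity
    constructor
    · intro h
      have h2 : c3 ^ N * (R0 - p) ≤ r - p := by nlinarith
      have h3 : q ≤ c3 ^ N := by
        rw [hqeq, div_le_iff_of_neg hneg]; linarith [h2]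
      have := Real.log_le_log hq0 h3
      rwa [Real.log_pow] at this
    · intro h
      have h3 : Real.log q ≤ Real.log (c3 ^ N) := by rwa [Real.log_pow]
      have h4 : q ≤ c3 ^ N := by
        have := Real.exp_le_exp.mpr h3
        rwa [Real.exp_log hq0, Real.exp_log hpow] at this
      rw [hqeq, div_le_iff_of_neg hneg] at h4
      nlinarith
  refine ⟨hanti, ?_, ?_⟩
  · show R _ ≤ r
    rw [← hc3, keyiff]
    calc Real.log q / Real.log c3 ≤ (⌈Real.log q / Real.log c3⌉ : ℝ) := Int.le_ceil _
    _ ≤ ((Int.toNat ⌈Real.log q / Real.log c3⌉ : ℤ) : ℝ) := by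
        exact_mod_cast Int.self_le_toNat _
    _ = _ := by push_cast; ring
  · intro N hN
    rw [Set.mem_setOf_eq, keyiff] at hN
    rw [← hc3]
    have : ⌈Real.log q / Real.log c3⌉ ≤ (N : ℤ) := Int.ceil_le.mpr (by exact_mod_cast hN)
    exact Int.toNat_le.mpr this
end
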